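/- Let Q = ℝⁿ, L(q,v,S) = K(q,v) - U(q,S) be a smooth Lagrangian, F^fr, F^ext : ℝⁿ × ℝⁿ × ℝ → ℝⁿ smooth forces, and P_H^ext : ℝ → ℝ. Suppose a smooth curve (q(t), S(t)) satisfies the thermodynamic evolution equations: d/dt(∂L/∂v)(q,q̇,S) - ∂L/∂q(q,q̇,S) = F^ext + F^fr and (∂L/∂S)(q,q̇,S)·Ṡ = ⟨F^fr, q̇⟩ - P_H^ext. Then the energy E(q,v,S) = ⟨∂L/∂v(q,v,S), v⟩ - L(q,v,S) satisfies dE/dt = ⟨F^ext, q̇⟩ + P_H^ext along the solution. -/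

import Mathlib

open scoped RealInnerProductSpace
open InnerProductSpace ContinuousLinearMap

/-- Energy balance (first law) for a simple closed thermodynamic system:
along a solution of the thermodynamic evolution equations, the energy
`E(q,v,S) = ⟪∂L/∂v, v⟫ - L` satisfies `dE/dt = ⟪F^ext, q̇⟫ + P_H^ext`. -/
theorem energy_balance_simple_system {n : ℕ}
    (K : EuclideanSpace ℝ (Fin n) → EuclideanSpace ℝ (Fin n) → ℝ)
    (U : EuclideanSpace ℝ (Fin n) → ℝ → ℝ)
    (L : EuclideanSpace ℝ (Fin n) → EuclideanSpace ℝ (Fin n) → ℝ → ℝ)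
    (hLKU : ∀ q v S, L q v S = K q v - U q S)
    (hL : ContDiff ℝ (⊤ : ℕ∞) (fun p : (EuclideanSpace ℝ (Fin n) × EuclideanSpace ℝ (Fin n)) × ℝ =>
      L p.1.1 p.1.2 p.2))
    (Lq Lv : EuclideanSpace ℝ (Fin n) → EuclideanSpace ℝ (Fin n) → ℝ → EuclideanSpace ℝ (Fin n))
    (LS : EuclideanSpace ℝ (Fin n) → EuclideanSpace ℝ (Fin n) → ℝ → ℝ)
    (hLq : ∀ q v S, HasGradientAt (fun q' => L q' v S) (Lq q v S) q)
    (hLv : ∀ q v S, HasGradientAt (fun v' => L q v' S) (Lv q v S) v)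
    (hLS : ∀ q v S, HasDerivAt (fun S' => L q v S') (LS q v S) S)
    (Ffr Fext : EuclideanSpace ℝ (Fin n) → EuclideanSpace ℝ (Fin n) → ℝ →
      EuclideanSpace ℝ (Fin n))
    (hFfr : ContDiff ℝ (⊤ : ℕ∞) (fun p : (EuclideanSpace ℝ (Fin n) × EuclideanSpace ℝ (Fin n)) × ℝ =>
      Ffr p.1.1 p.1.2 p.2))
    (hFext : ContDiff ℝ (⊤ : ℕ∞) (fun p : (EuclideanSpace ℝ (Fin n) × EuclideanSpace ℝ (Fin n)) × ℝ =>
      Fext p.1.1 p.1.2 p.2))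
    (PH : ℝ → ℝ)
    (q : ℝ → EuclideanSpace ℝ (Fin n)) (S : ℝ → ℝ)
    (hq : ContDiff ℝ (⊤ : ℕ∞) q) (hS : ContDiff ℝ (⊤ : ℕ∞) S)
    (heom1 : ∀ t, deriv (fun s => Lv (q s) (deriv q s) (S s)) t - Lq (q t) (deriv q t) (S t)
      = Fext (q t) (deriv q t) (S t) + Ffr (q t) (deriv q t) (S t))
    (heom2 : ∀ t, LS (q t) (deriv q t) (S t) * deriv S t
      = ⟪Ffr (q t) (deriv q t) (S t), deriv q t⟫ - PH t) :
    ∀ t, deriv (fun s => ⟪Lv (q s) (deriv q s) (S s), deriv q s⟫ - L (q s) (deriv q s) (S s)) t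
      = ⟪Fext (q t) (deriv q t) (S t), deriv q t⟫ + PH t := by
  intro t
  set f := fun p : (EuclideanSpace ℝ (Fin n) × EuclideanSpace ℝ (Fin n)) × ℝ =>
    L p.1.1 p.1.2 p.2 with hf
  set jq : EuclideanSpace ℝ (Fin n) →L[ℝ]
      (EuclideanSpace ℝ (Fin n) × EuclideanSpace ℝ (Fin n)) × ℝ :=
    ((ContinuousLinearMap.id ℝ _).prod 0).prod 0 with hjq
  set jv : EuclideanSpace ℝ (Fin n) →L[ℝ]
      (EuclideanSpace ℝ (Fin n) × EuclideanSpace ℝ (Fin n)) × ℝ :=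
    ((0 : EuclideanSpace ℝ (Fin n) →L[ℝ] EuclideanSpace ℝ (Fin n)).prod
      (ContinuousLinearMap.id ℝ _)).prod 0 with hjv
  set jS : ℝ →L[ℝ] (EuclideanSpace ℝ (Fin n) × EuclideanSpace ℝ (Fin n)) × ℝ :=
    (0 : ℝ →L[ℝ] EuclideanSpace ℝ (Fin n) × EuclideanSpace ℝ (Fin n)).prod
      (ContinuousLinearMap.id ℝ ℝ) with hjS
  have hfd : ∀ x, HasFDerivAt f (fderiv ℝ f x) x := fun x =>
    (hL.differentiable (by simp) x).hasFDerivAt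
  -- partial derivative identifications
  have hq' : ∀ x : (EuclideanSpace ℝ (Fin n) × EuclideanSpace ℝ (Fin n)) × ℝ,
      toDual ℝ _ (Lq x.1.1 x.1.2 x.2) = (fderiv ℝ f x).comp jq := by
    intro x
    have hincl : HasFDerivAt (fun q' : EuclideanSpace ℝ (Fin n) => ((q', x.1.2), x.2))
        jq x.1.1 := by
      have h : (fun q' : EuclideanSpace ℝ (Fin n) => ((q', x.1.2), x.2))
          = fun q' => jq q' + ((0, x.1.2), x.2) := by
        funext w; simp [hjq, Prod.ext_iff]
      rw [h]; exact jq.hasFDerivAt.add_const _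
    exact (hLq x.1.1 x.1.2 x.2).hasFDerivAt.unique ((hfd ((x.1.1, x.1.2), x.2)).comp x.1.1 hincl :)
  have hv' : ∀ x : (EuclideanSpace ℝ (Fin n) × EuclideanSpace ℝ (Fin n)) × ℝ,
      toDual ℝ _ (Lv x.1.1 x.1.2 x.2) = (fderiv ℝ f x).comp jv := by
    intro x
    have hincl : HasFDerivAt (fun v' : EuclideanSpace ℝ (Fin n) => ((x.1.1, v'), x.2))
        jv x.1.2 := by
      have h : (fun v' : EuclideanSpace ℝ (Fin n) => ((x.1.1, v'), x.2))
          = fun v' => jv v' + ((x.1.1, 0), x.2) := by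
        funext w; simp [hjv, Prod.ext_iff]
      rw [h]; exact jv.hasFDerivAt.add_const _
    exact (hLv x.1.1 x.1.2 x.2).hasFDerivAt.unique ((hfd ((x.1.1, x.1.2), x.2)).comp x.1.2 hincl :)
  have hS' : ∀ x : (EuclideanSpace ℝ (Fin n) × EuclideanSpace ℝ (Fin n)) × ℝ,
      LS x.1.1 x.1.2 x.2 = fderiv ℝ f x (((0, 0), 1)) := by
    intro x
    have hincl : HasFDerivAt (fun S' : ℝ => ((x.1.1, x.1.2), S')) jS x.2 := by
      have h : (fun S' : ℝ => ((x.1.1, x.1.2), S'))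
          = fun S' => jS S' + ((x.1.1, x.1.2), 0) := by
        funext w; simp [hjS, Prod.ext_iff]
      rw [h]; exact jS.hasFDerivAt.add_const _
    have hcomp : HasDerivAt (fun S' => L x.1.1 x.1.2 S')
        (((fderiv ℝ f x).comp jS) 1) x.2 := (((hfd ((x.1.1, x.1.2), x.2)).comp x.2 hincl).hasDerivAt :)
    have h2 := (hLS x.1.1 x.1.2 x.2).unique hcomp
    rw [h2]; simp [hjS]; rfl
  -- total derivative decomposition
  have hdecomp : ∀ x y : (EuclideanSpace ℝ (Fin n) × EuclideanSpace ℝ (Fin n)) × ℝ,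
      fderiv ℝ f x y = ⟪Lq x.1.1 x.1.2 x.2, y.1.1⟫ + ⟪Lv x.1.1 x.1.2 x.2, y.1.2⟫
        + LS x.1.1 x.1.2 x.2 * y.2 := by
    intro x y
    have hy : y = jq y.1.1 + jv y.1.2 + y.2 • (((0, 0), 1) :
        (EuclideanSpace ℝ (Fin n) × EuclideanSpace ℝ (Fin n)) × ℝ) := by
      simp [hjq, hjv, Prod.ext_iff]
    have e1 : ⟪Lq x.1.1 x.1.2 x.2, y.1.1⟫ = fderiv ℝ f x (jq y.1.1) := by
      have := congrArg (fun T : EuclideanSpace ℝ (Fin n) →L[ℝ] ℝ => T y.1.1) (hq' x)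
      simpa using this
    have e2 : ⟪Lv x.1.1 x.1.2 x.2, y.1.2⟫ = fderiv ℝ f x (jv y.1.2) := by
      have := congrArg (fun T : EuclideanSpace ℝ (Fin n) →L[ℝ] ℝ => T y.1.2) (hv' x)
      simpa using this
    rw [e1, e2, hS' x]
    conv_lhs => rw [hy]
    rw [map_add, map_add, map_smul, smul_eq_mul]
    ring
  -- velocity is C¹
  set v := deriv q with hvdef
  have hv : ContDiff ℝ 1 v := by
    have h1 : ContDiff ℝ 1 (fderiv ℝ q) := hq.fderiv_right (by exact WithTop.coe_le_coe.mpr le_top)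
    have h2 : v = fun s => (ContinuousLinearMap.apply ℝ (EuclideanSpace ℝ (Fin n)) (1 : ℝ))
        (fderiv ℝ q s) := by
      funext s; exact fderiv_apply_one_eq_deriv.symm
    rw [h2]
    exact (ContinuousLinearMap.apply ℝ _ (1 : ℝ)).contDiff.comp h1
  set c : ℝ → (EuclideanSpace ℝ (Fin n) × EuclideanSpace ℝ (Fin n)) × ℝ :=
    fun s => ((q s, v s), S s) with hc
  have hcsm : ContDiff ℝ 1 c := ((hq.of_le (by simp)).prodMk hv).prodMk (hS.of_le (by simp))
  set P : (EuclideanSpace ℝ (Fin n) × EuclideanSpace ℝ (Fin n)) × ℝ →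
      EuclideanSpace ℝ (Fin n) :=
    fun x => (toDual ℝ _).symm ((fderiv ℝ f x).comp jv) with hP
  have hPeq : ∀ x, Lv x.1.1 x.1.2 x.2 = P x := by
    intro x
    rw [hP]; dsimp only; rw [← hv' x]; simp
  have hPsm : ContDiff ℝ 1 P := by
    have h1 : ContDiff ℝ 1 (fderiv ℝ f) := hL.fderiv_right (by exact WithTop.coe_le_coe.mpr le_top)
    have h2 := ((ContinuousLinearMap.compL ℝ (EuclideanSpace ℝ (Fin n))
      ((EuclideanSpace ℝ (Fin n) × EuclideanSpace ℝ (Fin n)) × ℝ) ℝ).flip jv).contDiff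
        (𝕜 := ℝ) (n := 1)
    exact ((toDual ℝ (EuclideanSpace ℝ (Fin n))).symm.contDiff).comp (h2.comp h1)
  have hfun : (fun s => Lv (q s) (v s) (S s)) = fun s => P (c s) := by
    funext s; exact hPeq (c s)
  have hpdiff : DifferentiableAt ℝ (fun s => Lv (q s) (v s) (S s)) t := by
    rw [hfun]; exact ((hPsm.comp hcsm).differentiable one_ne_zero t)
  have hp' : HasDerivAt (fun s => Lv (q s) (v s) (S s))
      (deriv (fun s => Lv (q s) (v s) (S s)) t) t := hpdiff.hasDerivAt
  -- derivatives of the curve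
  have hqd : HasDerivAt q (v t) t := (hq.differentiable (by simp) t).hasDerivAt
  have hvd : HasDerivAt v (deriv v t) t := ((hv.differentiable one_ne_zero) t).hasDerivAt
  have hSd : HasDerivAt S (deriv S t) t := ((hS.differentiable (by simp)) t).hasDerivAt
  have hcd : HasDerivAt c (((v t, deriv v t), deriv S t)) t := (hqd.prodMk hvd).prodMk hSd
  have hLd : HasDerivAt (fun s => L (q s) (v s) (S s))
      (fderiv ℝ f (c t) ((v t, deriv v t), deriv S t)) t :=
    (hfd (c t)).comp_hasDerivAt t hcd
  have hinner : HasDerivAt (fun s => ⟪Lv (q s) (v s) (S s), v s⟫)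
      (⟪Lv (q t) (v t) (S t), deriv v t⟫
        + ⟪deriv (fun s => Lv (q s) (v s) (S s)) t, v t⟫) t :=
    HasDerivAt.inner ℝ hp' hvd
  have hE : HasDerivAt
      (fun s => ⟪Lv (q s) (v s) (S s), v s⟫ - L (q s) (v s) (S s))
      ((⟪Lv (q t) (v t) (S t), deriv v t⟫
          + ⟪deriv (fun s => Lv (q s) (v s) (S s)) t, v t⟫)
        - fderiv ℝ f (c t) ((v t, deriv v t), deriv S t)) t := hinner.sub hLd
  rw [hE.deriv, hdecomp (c t) ((v t, deriv v t), deriv S t)]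
  have key1 := heom1 t
  have key2 := heom2 t
  have hsub : ⟪deriv (fun s => Lv (q s) (v s) (S s)) t, v t⟫
      - ⟪Lq (q t) (v t) (S t), v t⟫
      = ⟪Fext (q t) (v t) (S t), v t⟫ + ⟪Ffr (q t) (v t) (S t), v t⟫ := by
    rw [← inner_sub_left, key1, inner_add_left]
  show ⟪Lv (q t) (v t) (S t), deriv v t⟫ + ⟪deriv (fun s => Lv (q s) (v s) (S s)) t, v t⟫
      - (⟪Lq (q t) (v t) (S t), v t⟫ + ⟪Lv (q t) (v t) (S t), deriv v t⟫
        + LS (q t) (v t) (S t) * deriv S t)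
      = ⟪Fext (q t) (v t) (S t), v t⟫ + PH t
  rw [key2]
  linarith [hsub]
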